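/- arXiv:0912.2033 — 3 statements merged into one kernel-verified Lean document; each statement's English description precedes it below -/
import Mathlib

section
/- Lagrange multiplier lemma: Let N be a Banach manifold, F a Banach space, g : N → F a smooth submersion so that g⁻¹(0) is a submanifold of N, and f : N → ℝ smooth. Then x ∈ g⁻¹(0) is a critical point of the restriction of f to g⁻¹(0) if and only if there exists λ ∈ F* such that x is a critical point of f − λ ∘ g. -/
/-- Lagrange multiplier lemma: for a smooth submersion `g : N → F` (with split kernels,
so that `g⁻¹(0)` is a submanifold) and a smooth `f : N → ℝ`, a point `x ∈ g⁻¹(0)` is a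
critical point of `f` restricted to `g⁻¹(0)` (i.e. `df(x)` vanishes on the tangent space
`ker dg(x)`) iff there is a continuous linear functional `lam ∈ F*` such that `x` is a
critical point of `f − lam ∘ g`. -/
theorem lagrange_multiplier_lemma {E F : Type*}
    [NormedAddCommGroup E] [NormedSpace ℝ E] [CompleteSpace E]
    [NormedAddCommGroup F] [NormedSpace ℝ F] [CompleteSpace F]
    (g : E → F) (f : E → ℝ) (hg : ContDiff ℝ (⊤ : ℕ∞) g) (hf : ContDiff ℝ (⊤ : ℕ∞) f)
    (hsub : ∀ y : E, Function.Surjective (fderiv ℝ g y) ∧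
      (LinearMap.ker (fderiv ℝ g y : E →ₗ[ℝ] F)).ClosedComplemented)
    (x : E) (hx : g x = 0) :
    (∀ v ∈ LinearMap.ker (fderiv ℝ g x : E →ₗ[ℝ] F), fderiv ℝ f x v = 0) ↔
      ∃ lam : F →L[ℝ] ℝ, fderiv ℝ (fun y => f y - lam (g y)) x = 0 := by
  set D : E →L[ℝ] F := fderiv ℝ g x with hD
  set df : E →L[ℝ] ℝ := fderiv ℝ f x with hdf
  have hDsurj : Function.Surjective D := (hsub x).1
  have hKcompl : (LinearMap.ker (D : E →ₗ[ℝ] F)).ClosedComplemented := (hsub x).2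
  have hgd : DifferentiableAt ℝ g x := (hg.differentiable (by simp)).differentiableAt
  have hfd : DifferentiableAt ℝ f x := (hf.differentiable (by simp)).differentiableAt
  have key : ∀ lam : F →L[ℝ] ℝ,
      HasFDerivAt (fun y => f y - lam (g y)) (df - lam.comp D) x := by
    intro lam
    exact hfd.hasFDerivAt.sub ((lam.hasFDerivAt).comp x hgd.hasFDerivAt)
  constructor
  · intro hcrit
    -- choose a closed complement C of the kernel
    obtain ⟨C, hCclosed, hCcompl⟩ := hKcompl.exists_isClosed_isCompl
    haveI : CompleteSpace C := hCclosed.completeSpace_coe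
    -- D restricted to C is a continuous linear equivalence C ≃ F
    set DC : C →L[ℝ] F := D.comp C.subtypeL with hDC
    have hinj : LinearMap.ker (DC : C →ₗ[ℝ] F) = ⊥ := by
      rw [Submodule.eq_bot_iff]
      intro a ha
      have haK : (a : E) ∈ LinearMap.ker (D : E →ₗ[ℝ] F) := ha
      have : (a : E) ∈ (LinearMap.ker (D : E →ₗ[ℝ] F)) ⊓ C := ⟨haK, a.2⟩
      rw [hCcompl.inf_eq_bot] at this
      exact Subtype.ext (by simpa using this)
    have hsurjC : LinearMap.range (DC : C →ₗ[ℝ] F) = ⊤ := by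
      rw [LinearMap.range_eq_top]
      intro w
      obtain ⟨v, hv⟩ := hDsurj w
      obtain ⟨k, c, hkc, -⟩ := Submodule.existsUnique_add_of_isCompl hCcompl v
      refine ⟨c, ?_⟩
      have : D ((k : E) + (c : E)) = w := by rw [hkc]; exact hv
      have hk0 : D (k : E) = 0 := k.2
      show D c = w
      simpa [ContinuousLinearMap.comp_apply, hk0] using this
    set e : C ≃L[ℝ] F := ContinuousLinearEquiv.ofBijective DC hinj hsurjC with he
    refine ⟨(df.comp C.subtypeL).comp (e.symm : F →L[ℝ] C), ?_⟩
    have := (key ((df.comp C.subtypeL).comp (e.symm : F →L[ℝ] C))).fderiv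
    rw [this]
    ext v
    obtain ⟨k, c, hkc, -⟩ := Submodule.existsUnique_add_of_isCompl hCcompl v
    have hdfk : df (k : E) = 0 := hcrit _ k.2
    have hDk : D (k : E) = 0 := k.2
    have hDv : D v = DC c := by
      rw [← hkc]; simp [DC, ContinuousLinearMap.comp_apply, hDk]
    have hec2 : e.symm (D (c : E)) = c := by
      rw [show D (c : E) = DC c from rfl]
      exact e.symm_apply_apply c
    simp only [ContinuousLinearMap.sub_apply, ContinuousLinearMap.comp_apply,
      ContinuousLinearMap.zero_apply, ← hkc, map_add, hdfk, hDk, zero_add,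
      Submodule.subtypeL_apply, ContinuousLinearEquiv.coe_coe, map_zero,
      ZeroMemClass.coe_zero, hec2, sub_self, zero_sub, neg_zero]
  · rintro ⟨lam, hlam⟩
    have heq : df - lam.comp D = 0 := by rw [← (key lam).fderiv, hlam]
    intro v hv
    have := congrArg (fun T : E →L[ℝ] ℝ => T v) heq
    simp only [ContinuousLinearMap.sub_apply, ContinuousLinearMap.comp_apply,
      ContinuousLinearMap.zero_apply, sub_eq_zero] at this
    rw [this, show D v = 0 from (LinearMap.mem_ker).mp hv, map_zero]
end

section
/- The Poincaré–Cartan 2-form Ω_L = ∑_{l=0}^{k−1} dq^{(l)i} ∧ dp̂_{(l)i} of a k-th order Lagrangian L on ℝⁿ, regarded as a 2-form on the (2k)n-dimensional space with coordinates (q^{(0)}, …, q^{(2k−1)}), is nondegenerate (symplectic) if and only if the Hessian matrix (∂²L/∂q^{(k)i} ∂q^{(k)j}) is invertible. -/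
open Finset

namespace PC

variable {N n : ℕ}

abbrev E (N n : ℕ) := Fin N → Fin n → ℝ

noncomputable def P (N n m : ℕ) : E N n →L[ℝ] E N n :=
  LinearMap.toContinuousLinearMap
  { toFun := fun q r => if (r : ℕ) ≤ m then q r else 0
    map_add' := by intro a b; funext r; by_cases h : (r:ℕ) ≤ m <;> simp [h]
    map_smul' := by intro c a; funext r; by_cases h : (r:ℕ) ≤ m <;> simp [h] }

lemma P_apply (m : ℕ) (q : E N n) (r : Fin N) :
    P N n m q r = if (r : ℕ) ≤ m then q r else 0 := rfl

lemma P_P {m m' : ℕ} (h : m ≤ m') (q : E N n) :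
    P N n m (P N n m' q) = P N n m q := by
  funext r j
  simp only [P_apply]
  by_cases hr : (r:ℕ) ≤ m
  · rw [if_pos hr, if_pos hr, if_pos (le_trans hr h)]
  · rw [if_neg hr, if_neg hr]

lemma P_single_le {m : ℕ} {r : Fin N} (h : (r:ℕ) ≤ m) (x : Fin n → ℝ) :
    P N n m (Pi.single r x) = Pi.single r x := by
  funext r'
  rw [P_apply]
  by_cases hr : r' = r
  · subst hr; rw [if_pos h]
  · rw [Pi.single_eq_of_ne hr, ite_self]

lemma P_single_gt {m : ℕ} {r : Fin N} (h : m < (r:ℕ)) (x : Fin n → ℝ) :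
    P N n m (Pi.single r x) = 0 := by
  funext r'
  rw [P_apply]
  by_cases hr : r' = r
  · subst hr; rw [if_neg (by omega)]; rfl
  · rw [Pi.single_eq_of_ne hr, ite_self]; rfl

def Dep (m : ℕ) (f : E N n → ℝ) : Prop := ∀ q, f (P N n m q) = f q

lemma Dep.fderiv_eq {m : ℕ} {f : E N n → ℝ} (hd : Dep m f) (hf : ContDiff ℝ (⊤ : ℕ∞) f)
    (q : E N n) :
    fderiv ℝ f q = (fderiv ℝ f (P N n m q)).comp (P N n m) := by
  conv_lhs => rw [show f = f ∘ (P N n m) from funext fun q => (hd q).symm]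
  rw [fderiv_comp q ((hf.differentiable (by simp)) _) ((P N n m).differentiableAt),
    (P N n m).fderiv]

lemma Dep.fderiv_single_eq_zero {m : ℕ} {f : E N n → ℝ} (hd : Dep m f)
    (hf : ContDiff ℝ (⊤ : ℕ∞) f) (q : E N n) {r : Fin N} (h : m < (r:ℕ)) (x : Fin n → ℝ) :
    fderiv ℝ f q (Pi.single r x) = 0 := by
  rw [hd.fderiv_eq hf q]
  simp [ContinuousLinearMap.comp_apply, P_single_gt h]

lemma Dep.fderiv_apply {m : ℕ} {f : E N n → ℝ} (hd : Dep m f) (hf : ContDiff ℝ (⊤ : ℕ∞) f)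
    (v : E N n) : Dep m (fun q => fderiv ℝ f q v) := by
  intro q
  simp only
  rw [hd.fderiv_eq hf (P N n m q), hd.fderiv_eq hf q, P_P le_rfl]

lemma contDiff_fderiv_apply {F : Type*} [NormedAddCommGroup F] [NormedSpace ℝ F]
    {f : F → ℝ} (hf : ContDiff ℝ (⊤ : ℕ∞) f) (v : F) :
    ContDiff ℝ (⊤ : ℕ∞) (fun q => fderiv ℝ f q v) :=
  (hf.fderiv_right (by simp)).clm_apply contDiff_const


noncomputable def dT (N n : ℕ) (f : (Fin N → Fin n → ℝ) → ℝ) (q : Fin N → Fin n → ℝ) : ℝ :=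
  ∑ r : Fin N, ∑ i : Fin n,
    (if h : (r : ℕ) + 1 < N then q ⟨(r : ℕ) + 1, h⟩ i else 0) *
      fderiv ℝ f q (Pi.single r (Pi.single i 1))

noncomputable def cCLM (N n : ℕ) (r : Fin N) (i : Fin n) : E N n →L[ℝ] ℝ :=
  if h : (r : ℕ) + 1 < N then
    (ContinuousLinearMap.proj i : (Fin n → ℝ) →L[ℝ] ℝ).comp
      (ContinuousLinearMap.proj (⟨(r:ℕ)+1, h⟩ : Fin N) : E N n →L[ℝ] (Fin n → ℝ))
  else 0

lemma cCLM_apply (r : Fin N) (i : Fin n) (q : E N n) :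
    cCLM N n r i q = if h : (r : ℕ) + 1 < N then q ⟨(r:ℕ)+1, h⟩ i else 0 := by
  unfold cCLM
  by_cases h : (r:ℕ) + 1 < N
  · rw [dif_pos h, dif_pos h]; rfl
  · rw [dif_neg h, dif_neg h]; rfl

lemma dT_eq (f : E N n → ℝ) (q : E N n) :
    dT N n f q = ∑ r : Fin N, ∑ i : Fin n,
      cCLM N n r i q * fderiv ℝ f q (Pi.single r (Pi.single i 1)) := by
  unfold dT
  refine Finset.sum_congr rfl fun r _ => Finset.sum_congr rfl fun i _ => ?_
  rw [cCLM_apply]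

lemma dT_def (f : E N n → ℝ) :
    dT N n f = fun q => ∑ r : Fin N, ∑ i : Fin n,
      cCLM N n r i q * fderiv ℝ f q (Pi.single r (Pi.single i 1)) := funext fun q => dT_eq f q

lemma contDiff_dT {f : E N n → ℝ} (hf : ContDiff ℝ (⊤ : ℕ∞) f) :
    ContDiff ℝ (⊤ : ℕ∞) (dT N n f) := by
  rw [dT_def]
  exact ContDiff.sum fun r _ => ContDiff.sum fun i _ =>
    ((cCLM N n r i).contDiff).mul (contDiff_fderiv_apply hf _)

lemma dep_dT {m : ℕ} {f : E N n → ℝ} (hd : Dep m f) (hf : ContDiff ℝ (⊤ : ℕ∞) f) :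
    Dep (m+1) (dT N n f) := by
  intro q
  rw [dT_eq, dT_eq]
  refine Finset.sum_congr rfl fun r _ => Finset.sum_congr rfl fun i _ => ?_
  by_cases hr : (r:ℕ) ≤ m
  · have hg := hd.fderiv_apply hf (Pi.single r (Pi.single i 1))
    have h1 : fderiv ℝ f (P N n (m+1) q) (Pi.single r (Pi.single i 1))
        = fderiv ℝ f q (Pi.single r (Pi.single i 1)) := by
      calc fderiv ℝ f (P N n (m+1) q) (Pi.single r (Pi.single i 1))
          = fderiv ℝ f (P N n m (P N n (m+1) q)) (Pi.single r (Pi.single i 1)) :=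
            (hg (P N n (m+1) q)).symm
        _ = fderiv ℝ f (P N n m q) (Pi.single r (Pi.single i 1)) := by
            rw [P_P (Nat.le_succ m)]
        _ = fderiv ℝ f q (Pi.single r (Pi.single i 1)) := hg q
    rw [h1]
    congr 1
    rw [cCLM_apply, cCLM_apply]
    by_cases h : (r:ℕ) + 1 < N
    · rw [dif_pos h, dif_pos h, P_apply, if_pos (show ((⟨(r:ℕ)+1,h⟩:Fin N):ℕ) ≤ m+1 by show (r:ℕ)+1 ≤ m+1; omega)]
    · rw [dif_neg h, dif_neg h]
  · rw [hd.fderiv_single_eq_zero hf _ (by omega), hd.fderiv_single_eq_zero hf _ (by omega),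
      mul_zero, mul_zero]

lemma fderiv_dT_apply_top {m : ℕ} {f : E N n → ℝ} (hd : Dep m f) (hf : ContDiff ℝ (⊤ : ℕ∞) f)
    (q : E N n) (h2 : m + 1 < N) (j : Fin n) :
    fderiv ℝ (dT N n f) q (Pi.single (⟨m+1, h2⟩ : Fin N) (Pi.single j 1))
      = fderiv ℝ f q (Pi.single (⟨m, by omega⟩ : Fin N) (Pi.single j 1)) := by
  have hg : ∀ (r : Fin N) (i : Fin n), ContDiff ℝ (⊤ : ℕ∞)
      (fun q => fderiv ℝ f q (Pi.single r (Pi.single i 1))) :=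
    fun r i => contDiff_fderiv_apply hf _
  have hdiff : ∀ (r : Fin N) (i : Fin n), DifferentiableAt ℝ
      (fun q => cCLM N n r i q * fderiv ℝ f q (Pi.single r (Pi.single i 1))) q :=
    fun r i => (((cCLM N n r i).contDiff.mul (hg r i)).differentiable (by simp)) q
  rw [dT_def]
  rw [fderiv_fun_sum (fun r _ => DifferentiableAt.fun_sum (fun i _ => hdiff r i))]
  rw [ContinuousLinearMap.sum_apply]
  have step : ∀ r : Fin N,
      fderiv ℝ (fun q => ∑ i : Fin n,
          cCLM N n r i q * fderiv ℝ f q (Pi.single r (Pi.single i 1))) q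
        (Pi.single (⟨m+1, h2⟩ : Fin N) (Pi.single j 1))
      = ∑ i : Fin n, fderiv ℝ f q (Pi.single r (Pi.single i 1)) *
          cCLM N n r i (Pi.single (⟨m+1, h2⟩ : Fin N) (Pi.single j 1)) := by
    intro r
    rw [fderiv_fun_sum (fun i _ => hdiff r i), ContinuousLinearMap.sum_apply]
    refine Finset.sum_congr rfl fun i _ => ?_
    rw [fderiv_fun_mul ((cCLM N n r i).differentiableAt) ((hg r i).differentiable (by simp) q)]
    rw [ContinuousLinearMap.add_apply, ContinuousLinearMap.smul_apply,
      ContinuousLinearMap.smul_apply, (cCLM N n r i).fderiv]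
    have hz : fderiv ℝ (fun q => fderiv ℝ f q (Pi.single r (Pi.single i 1))) q
        (Pi.single (⟨m+1, h2⟩ : Fin N) (Pi.single j 1)) = 0 :=
      (hd.fderiv_apply hf _).fderiv_single_eq_zero (hg r i) q (by simp) _
    rw [hz]
    simp [smul_eq_mul]
  rw [Finset.sum_congr rfl (fun r _ => step r)]
  -- now compute the coefficient
  have hc : ∀ (r : Fin N) (i : Fin n),
      cCLM N n r i (Pi.single (⟨m+1, h2⟩ : Fin N) (Pi.single j 1))
        = if ((r:ℕ) = m ∧ i = j) then 1 else 0 := by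
    intro r i
    rw [cCLM_apply]
    by_cases h : (r:ℕ) + 1 < N
    · rw [dif_pos h]
      by_cases hrm : (r:ℕ) = m
      · have : (⟨(r:ℕ)+1, h⟩ : Fin N) = ⟨m+1, h2⟩ := by
          apply Fin.ext; simp [hrm]
        rw [this, Pi.single_eq_same]
        by_cases hij : i = j
        · subst hij; rw [Pi.single_eq_same, if_pos ⟨hrm, rfl⟩]
        · rw [Pi.single_eq_of_ne hij, if_neg (by tauto)]
      · have : (⟨(r:ℕ)+1, h⟩ : Fin N) ≠ ⟨m+1, h2⟩ := by
          simp [Fin.ext_iff]; omega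
        rw [Pi.single_eq_of_ne this, if_neg (by tauto)]
        rfl
    · rw [dif_neg h, if_neg (by omega)]
  rw [Finset.sum_congr rfl (fun r _ => Finset.sum_congr rfl (fun i _ => by rw [hc r i]))]
  rw [Finset.sum_eq_single (⟨m, by omega⟩ : Fin N)]
  · rw [Finset.sum_eq_single j]
    · simp
    · intro i _ hij
      rw [if_neg (by simp [hij]), mul_zero]
    · intro h; exact absurd (Finset.mem_univ j) h
  · intro r _ hr
    apply Finset.sum_eq_zero
    intro i _
    rw [if_neg, mul_zero]
    rintro ⟨h1, -⟩
    exact hr (Fin.ext h1)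
  · intro h; exact absurd (Finset.mem_univ _) h

lemma iter_props {m : ℕ} {f : E N n → ℝ} (hd : Dep m f) (hf : ContDiff ℝ (⊤ : ℕ∞) f) (s : ℕ) :
    ContDiff ℝ (⊤ : ℕ∞) ((dT N n)^[s] f) ∧ Dep (m+s) ((dT N n)^[s] f) := by
  induction s with
  | zero => exact ⟨hf, hd⟩
  | succ s ih =>
    rw [Function.iterate_succ_apply']
    exact ⟨contDiff_dT ih.1, dep_dT ih.2 ih.1⟩

lemma fderiv_iter_zero {m : ℕ} {f : E N n → ℝ} (hd : Dep m f) (hf : ContDiff ℝ (⊤ : ℕ∞) f)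
    (s : ℕ) (q : E N n) {r : Fin N} (h : m + s < (r:ℕ)) (x : Fin n → ℝ) :
    fderiv ℝ ((dT N n)^[s] f) q (Pi.single r x) = 0 :=
  (iter_props hd hf s).2.fderiv_single_eq_zero (iter_props hd hf s).1 q h x

lemma fderiv_iter_top {m : ℕ} {f : E N n → ℝ} (hd : Dep m f) (hf : ContDiff ℝ (⊤ : ℕ∞) f)
    (s : ℕ) (q : E N n) (h : m + s < N) (j : Fin n) :
    fderiv ℝ ((dT N n)^[s] f) q (Pi.single (⟨m+s, h⟩ : Fin N) (Pi.single j 1))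
      = fderiv ℝ f q (Pi.single (⟨m, by omega⟩ : Fin N) (Pi.single j 1)) := by
  induction s with
  | zero => rfl
  | succ s ih =>
    rw [Function.iterate_succ_apply']
    have h' : (m + s) + 1 < N := by omega
    have := fderiv_dT_apply_top (f := (dT N n)^[s] f) (iter_props hd hf s).2
      (iter_props hd hf s).1 q h' j
    have hfin : (⟨m + (s+1), h⟩ : Fin N) = ⟨(m+s)+1, h'⟩ := by apply Fin.ext; simp; omega
    rw [hfin, this]
    exact ih (by omega)


lemma single_eq_sum (m : Fin N) (x : Fin n → ℝ) :
    (Pi.single m x : E N n) = ∑ j : Fin n, x j • (Pi.single m (Pi.single j 1) : E N n) := by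
  funext r i
  have h0 : (∑ j : Fin n, x j • (Pi.single m (Pi.single j 1) : E N n)) r i
      = ∑ j : Fin n, x j * (Pi.single m (Pi.single j (1:ℝ)) : E N n) r i := by
    rw [Finset.sum_apply, Finset.sum_apply]
    rfl
  rw [h0]
  by_cases hr : r = m
  · subst hr
    rw [Pi.single_eq_same,
      Finset.sum_congr rfl (fun j _ => by rw [Pi.single_eq_same (M := fun _ : Fin N => Fin n → ℝ)])]
    rw [Finset.sum_eq_single i]
    · rw [Pi.single_eq_same, mul_one]
    · intro j _ hj; rw [Pi.single_eq_of_ne' hj, mul_zero]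
    · intro h; exact absurd (Finset.mem_univ _) h
  · simp [Pi.single_eq_of_ne hr]

lemma clm_apply_eq_sum (φ : E N n →L[ℝ] ℝ) (u : E N n) :
    φ u = ∑ m : Fin N, ∑ j : Fin n, u m j * φ (Pi.single m (Pi.single j 1)) := by
  conv_lhs => rw [← Finset.univ_sum_single u, map_sum]
  refine Finset.sum_congr rfl fun m _ => ?_
  rw [single_eq_sum m (u m), map_sum]
  refine Finset.sum_congr rfl fun j _ => ?_
  rw [map_smul, smul_eq_mul]

noncomputable def restrCLM (N M n : ℕ) (h : M ≤ N) : E N n →L[ℝ] E M n :=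
  LinearMap.toContinuousLinearMap
  { toFun := fun q m => q (Fin.castLE h m)
    map_add' := fun _ _ => rfl
    map_smul' := fun _ _ => rfl }

end PC

/-- The Poincaré–Cartan 2-form `Ω_L = ∑_{l<k} dq^{(l)i} ∧ dp̂_{(l)i}` of a `k`-th order
Lagrangian, viewed on the `(2k)n`-dimensional space with coordinates
`(q^{(0)}, …, q^{(2k−1)})` (the momenta `p̂_{(l)i}` being expressed via the total
derivative operator `d_T`), is nondegenerate at a point iff the Hessian
`(∂²L/∂q^{(k)i}∂q^{(k)j})` is invertible there. -/
theorem poincare_cartan_symplectic_iff_regular (n k : ℕ) (hk : 1 ≤ k)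
    (L : (Fin (k+1) → Fin n → ℝ) → ℝ) (hL : ContDiff ℝ (⊤ : ℕ∞) L) :
    let E := Fin (2*k) → Fin n → ℝ
    let π : E → (Fin (k+1) → Fin n → ℝ) := fun q m => q (Fin.castLE (by omega) m)
    let dT : (E → ℝ) → (E → ℝ) := fun f q =>
      ∑ r : Fin (2*k), ∑ i : Fin n,
        (if h : (r : ℕ) + 1 < 2*k then q ⟨(r : ℕ) + 1, h⟩ i else 0) *
          fderiv ℝ f q (Pi.single r (Pi.single i 1))
    let dLm : ℕ → Fin n → E → ℝ := fun m i q =>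
      if h : m < k + 1 then
        fderiv ℝ L (π q) (Pi.single (⟨m, h⟩ : Fin (k+1)) (Pi.single i 1))
      else 0
    let phat : ℕ → Fin n → E → ℝ := fun l i q =>
      ∑ s ∈ Finset.range (k - l), (-1:ℝ)^s * (dT^[s] (dLm (l + s + 1) i)) q
    ∀ q : E,
      ((∀ u : E,
          (∀ v : E, ∑ l : Fin k, ∑ i : Fin n,
            (u (Fin.castLE (by omega) l) i * fderiv ℝ (phat (l : ℕ) i) q v
              - v (Fin.castLE (by omega) l) i * fderiv ℝ (phat (l : ℕ) i) q u) = 0)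
          → u = 0)
        ↔ IsUnit (Matrix.det (Matrix.of fun i j : Fin n =>
            fderiv ℝ (dLm k i) q
              (Pi.single (⟨k, by omega⟩ : Fin (2*k)) (Pi.single j 1))))) := by
  intro E π dT dLm phat q
  have hk2 : k + 1 ≤ 2*k := by omega
  have hkk : k < 2*k := by omega
  -- basic facts about dLm
  have hdLm_cd : ∀ (m : ℕ) (i : Fin n), ContDiff ℝ (⊤ : ℕ∞) (dLm m i) := by
    intro m i
    show ContDiff ℝ (⊤ : ℕ∞) (fun q' => if h : m < k + 1 then
      fderiv ℝ L (π q') (Pi.single (⟨m, h⟩ : Fin (k+1)) (Pi.single i 1)) else 0)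
    by_cases hm : m < k + 1
    · simp only [dif_pos hm]
      exact (PC.contDiff_fderiv_apply hL _).comp (PC.restrCLM (2*k) (k+1) n hk2).contDiff
    · simp only [dif_neg hm]; exact contDiff_const
  have hdLm_dep : ∀ (m : ℕ) (i : Fin n), PC.Dep k (dLm m i) := by
    intro m i q'
    show (if h : m < k + 1 then
        fderiv ℝ L (π (PC.P (2*k) n k q')) (Pi.single (⟨m, h⟩ : Fin (k+1)) (Pi.single i 1)) else 0)
      = (if h : m < k + 1 then
        fderiv ℝ L (π q') (Pi.single (⟨m, h⟩ : Fin (k+1)) (Pi.single i 1)) else 0)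
    have hπ : π (PC.P (2*k) n k q') = π q' := by
      funext m'
      show PC.P (2*k) n k q' (Fin.castLE hk2 m') = q' (Fin.castLE hk2 m')
      rw [PC.P_apply, if_pos (by simp only [Fin.coe_castLE]; omega)]
    rw [hπ]
  set Hm : Matrix (Fin n) (Fin n) ℝ := Matrix.of (fun i j : Fin n =>
    fderiv ℝ (dLm k i) q (Pi.single (⟨k, hkk⟩ : Fin (2*k)) (Pi.single j 1))) with hHmdef
  have hHm : ∀ i j, Hm i j
      = fderiv ℝ (dLm k i) q (Pi.single (⟨k, hkk⟩ : Fin (2*k)) (Pi.single j 1)) :=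
    fun i j => rfl
  -- the derivative of phat as a sum
  have hfd : ∀ (l : ℕ), l < k → ∀ (i : Fin n) (v : E),
      fderiv ℝ (phat l i) q v = ∑ s ∈ Finset.range (k - l),
        (-1:ℝ)^s * fderiv ℝ ((PC.dT (2*k) n)^[s] (dLm (l + s + 1) i)) q v := by
    intro l hl i v
    have hG : ∀ s : ℕ, ContDiff ℝ (⊤ : ℕ∞) ((PC.dT (2*k) n)^[s] (dLm (l + s + 1) i)) :=
      fun s => (PC.iter_props (hdLm_dep _ i) (hdLm_cd _ i) s).1
    have hph : phat l i = fun q' => ∑ s ∈ Finset.range (k - l),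
        (-1:ℝ)^s * ((PC.dT (2*k) n)^[s] (dLm (l + s + 1) i)) q' := rfl
    rw [hph, fderiv_fun_sum (fun s _ => DifferentiableAt.const_mul ((hG s).differentiable (by simp) q) _),
      ContinuousLinearMap.sum_apply]
    refine Finset.sum_congr rfl fun s _ => ?_
    rw [fderiv_const_mul ((hG s).differentiable (by simp) q) ((-1:ℝ)^s)]
    rfl
  -- vanishing of high-order derivatives of phat
  have hvan : ∀ (l : ℕ), l < k → ∀ (i : Fin n) (r : Fin (2*k)) (j : Fin n),
      2*k ≤ (r:ℕ) + l →
      fderiv ℝ (phat l i) q (Pi.single r (Pi.single j 1)) = 0 := by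
    intro l hl i r j hr
    rw [hfd l hl i]
    apply Finset.sum_eq_zero
    intro s hs
    simp only [Finset.mem_range] at hs
    rw [PC.fderiv_iter_zero (hdLm_dep _ i) (hdLm_cd _ i) s q (by omega) _, mul_zero]
  -- top-order derivative of phat
  have htop : ∀ (l : ℕ), l < k → ∀ (i j : Fin n) (r : Fin (2*k)), (r:ℕ) = 2*k-1-l →
      fderiv ℝ (phat l i) q (Pi.single r (Pi.single j 1)) = (-1:ℝ)^(k-l-1) * Hm i j := by
    intro l hl i j r hr
    rw [hfd l hl i]
    have hmem : k-l-1 ∈ Finset.range (k-l) := Finset.mem_range.mpr (by omega)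
    rw [Finset.sum_eq_single (k-l-1)
      (fun s hs hne => by
        simp only [Finset.mem_range] at hs
        rw [PC.fderiv_iter_zero (hdLm_dep _ i) (hdLm_cd _ i) s q (by omega) _, mul_zero])
      (fun hcon => absurd hmem hcon)]
    have h1 : r = ⟨k + (k-l-1), by omega⟩ := Fin.ext (by simp only [Fin.val_mk]; omega)
    rw [h1, PC.fderiv_iter_top (hdLm_dep _ i) (hdLm_cd _ i) (k-l-1) q (by omega) j]
    have h2 : l + (k-l-1) + 1 = k := by omega
    rw [h2, hHm i j]
  constructor
  · -- nondegenerate → Hessian invertible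
    intro hnd
    show IsUnit Hm.det
    rw [isUnit_iff_ne_zero]
    intro hdet0
    obtain ⟨w, hw0, hww⟩ := Matrix.exists_mulVec_eq_zero_iff.mpr hdet0
    have hrt : 2*k-1 < 2*k := by omega
    have hu0 : (Pi.single (⟨2*k-1, hrt⟩ : Fin (2*k)) w : E) = 0 := by
      apply hnd
      intro v
      apply Finset.sum_eq_zero; intro l _
      apply Finset.sum_eq_zero; intro i _
      have hne : (Fin.castLE (by omega : k ≤ 2*k) l) ≠ (⟨2*k-1, hrt⟩ : Fin (2*k)) := by
        intro hcon
        have := congrArg Fin.val hcon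
        simp only [Fin.coe_castLE, Fin.val_mk] at this
        omega
      have h1 : (Pi.single (⟨2*k-1, hrt⟩ : Fin (2*k)) w : E) (Fin.castLE (by omega) l) i = 0 := by
        rw [Pi.single_eq_of_ne hne, Pi.zero_apply]
      have h2 : fderiv ℝ (phat (l:ℕ) i) q (Pi.single (⟨2*k-1, hrt⟩ : Fin (2*k)) w) = 0 := by
        rw [PC.single_eq_sum, map_sum]
        by_cases hl0 : (l:ℕ) = 0
        · have hterm : ∀ j : Fin n,
              fderiv ℝ (phat (l:ℕ) i) q (w j • (Pi.single (⟨2*k-1, hrt⟩ : Fin (2*k)) (Pi.single j 1) : E))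
              = (-1:ℝ)^(k-(l:ℕ)-1) * (Hm i j * w j) := by
            intro j
            rw [map_smul, smul_eq_mul,
              htop (l:ℕ) l.isLt i j ⟨2*k-1, hrt⟩ (by simp only [Fin.val_mk]; omega)]
            ring
          rw [Finset.sum_congr rfl fun j _ => hterm j, ← Finset.mul_sum]
          have hmv : ∑ j, Hm i j * w j = Hm.mulVec w i := rfl
          rw [hmv, hww, Pi.zero_apply, mul_zero]
        · apply Finset.sum_eq_zero; intro j _
          rw [map_smul, smul_eq_mul,
            hvan (l:ℕ) l.isLt i ⟨2*k-1, hrt⟩ j (by simp only [Fin.val_mk]; omega), mul_zero]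
      rw [h1, h2, zero_mul, mul_zero, sub_zero]
    apply hw0
    funext j
    have h3 := congrFun (congrFun hu0 ⟨2*k-1, hrt⟩) j
    rw [Pi.single_eq_same] at h3
    simpa using h3
  · -- Hessian invertible → nondegenerate
    intro hdet0 u hu
    have hdet : IsUnit Hm.det := hdet0
    have hvm : ∀ x : Fin n → ℝ, Matrix.vecMul x Hm = 0 → x = 0 := by
      intro x hx
      have h1 := congrArg (fun y => Matrix.vecMul y Hm⁻¹) hx
      rwa [Matrix.vecMul_vecMul, Matrix.mul_nonsing_inv Hm hdet, Matrix.vecMul_one,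
        Matrix.zero_vecMul] at h1
    have hmv : ∀ x : Fin n → ℝ, Hm.mulVec x = 0 → x = 0 := by
      intro x hx
      have h1 := congrArg (fun y => Matrix.mulVec Hm⁻¹ y) hx
      rwa [Matrix.mulVec_mulVec, Matrix.nonsing_inv_mul Hm hdet, Matrix.one_mulVec,
        Matrix.mulVec_zero] at h1
    have key1 : ∀ (r : Fin (2*k)), k ≤ (r:ℕ) → ∀ j : Fin n,
        ∑ l : Fin k, ∑ i : Fin n,
          u (Fin.castLE (by omega) l) i *
            fderiv ℝ (phat (l:ℕ) i) q (Pi.single r (Pi.single j 1)) = 0 := by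
      intro r hr j
      have h := hu (Pi.single r (Pi.single j 1))
      calc ∑ l : Fin k, ∑ i : Fin n,
            u (Fin.castLE (by omega) l) i *
              fderiv ℝ (phat (l:ℕ) i) q (Pi.single r (Pi.single j 1))
          = ∑ l : Fin k, ∑ i : Fin n,
            (u (Fin.castLE (by omega) l) i *
              fderiv ℝ (phat (l:ℕ) i) q (Pi.single r (Pi.single j 1))
            - (Pi.single r (Pi.single j 1) : E) (Fin.castLE (by omega) l) i *
              fderiv ℝ (phat (l:ℕ) i) q u) := by
            refine Finset.sum_congr rfl fun l _ => Finset.sum_congr rfl fun i _ => ?_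
            have hne : (Fin.castLE (by omega : k ≤ 2*k) l) ≠ r := by
              intro hcon
              have := congrArg Fin.val hcon
              simp only [Fin.coe_castLE] at this
              omega
            rw [Pi.single_eq_of_ne hne, Pi.zero_apply, zero_mul, sub_zero]
        _ = 0 := h
    -- Stage 1 : the position components of u vanish
    have stage1 : ∀ t : ℕ, ∀ l : Fin k, (l:ℕ) < t → u (Fin.castLE (by omega) l) = 0 := by
      intro t
      induction t with
      | zero => exact fun l hl => absurd hl (Nat.not_lt_zero _)
      | succ t ih =>
        intro l hl
        by_cases hc : (l:ℕ) < t
        · exact ih l hc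
        · have hlt : (l:ℕ) = t := by omega
          apply hvm
          funext j
          simp only [Pi.zero_apply]
          have e := key1 ⟨2*k-1-t, by omega⟩ (by simp only [Fin.val_mk]; omega) j
          have ecol : (∑ l' : Fin k, ∑ i : Fin n,
                u (Fin.castLE (by omega) l') i *
                  fderiv ℝ (phat ((l':ℕ)) i) q
                    (Pi.single (⟨2*k-1-t, by omega⟩ : Fin (2*k)) (Pi.single j 1)))
              = ∑ i : Fin n, u (Fin.castLE (by omega) l) i *
                  fderiv ℝ (phat ((l:ℕ)) i) q
                    (Pi.single (⟨2*k-1-t, by omega⟩ : Fin (2*k)) (Pi.single j 1)) := by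
            apply Finset.sum_eq_single
            · intro l' _ hl'
              by_cases hc' : (l':ℕ) < t
              · apply Finset.sum_eq_zero; intro i _
                rw [ih l' hc', Pi.zero_apply, zero_mul]
              · apply Finset.sum_eq_zero; intro i _
                have hne : ((l':ℕ)) ≠ t := fun hq => hl' (Fin.ext (by omega))
                rw [hvan (l':ℕ) l'.isLt i ⟨2*k-1-t, by omega⟩ j
                  (by simp only [Fin.val_mk]; omega), mul_zero]
            · intro hcon; exact absurd (Finset.mem_univ _) hcon
          rw [ecol] at e
          have hterm : ∀ i, u (Fin.castLE (by omega : k ≤ 2*k) l) i *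
              fderiv ℝ (phat ((l:ℕ)) i) q
                (Pi.single (⟨2*k-1-t, by omega⟩ : Fin (2*k)) (Pi.single j 1))
              = (-1:ℝ)^(k-(l:ℕ)-1) * (u (Fin.castLE (by omega) l) i * Hm i j) := by
            intro i
            rw [htop (l:ℕ) l.isLt i j ⟨2*k-1-t, by omega⟩ (by simp only [Fin.val_mk]; omega)]
            ring
          rw [Finset.sum_congr rfl fun i _ => hterm i, ← Finset.mul_sum] at e
          have hsum : ∑ i, u (Fin.castLE (by omega : k ≤ 2*k) l) i * Hm i j = 0 :=
            (mul_eq_zero.mp e).resolve_left (pow_ne_zero _ (by norm_num))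
          exact hsum
    have hs1 : ∀ l : Fin k, u (Fin.castLE (by omega) l) = 0 := fun l => stage1 k l l.isLt
    -- Stage 2 : the 2-form pairing of u against position directions
    have key2 : ∀ (l0 : Fin k) (i0 : Fin n), fderiv ℝ (phat ((l0:ℕ)) i0) q u = 0 := by
      intro l0 i0
      have h := hu (Pi.single (Fin.castLE (by omega) l0) (Pi.single i0 1))
      rw [Finset.sum_congr rfl (fun l _ => Finset.sum_sub_distrib _ _), Finset.sum_sub_distrib] at h
      rw [Finset.sum_eq_zero (fun l (_ : l ∈ Finset.univ) => Finset.sum_eq_zero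
        (fun i (_ : i ∈ Finset.univ) => by
          rw [hs1 l, Pi.zero_apply, zero_mul])), zero_sub, neg_eq_zero] at h
      have ecol : (∑ l : Fin k, ∑ i : Fin n,
            (Pi.single (Fin.castLE (by omega) l0) (Pi.single i0 1) : E)
              (Fin.castLE (by omega) l) i * fderiv ℝ (phat ((l:ℕ)) i) q u)
          = ∑ i : Fin n,
            (Pi.single (Fin.castLE (by omega) l0) (Pi.single i0 1) : E)
              (Fin.castLE (by omega) l0) i * fderiv ℝ (phat ((l0:ℕ)) i) q u := by
        apply Finset.sum_eq_single
        · intro l _ hl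
          apply Finset.sum_eq_zero; intro i _
          have hne : (Fin.castLE (by omega : k ≤ 2*k) l) ≠ Fin.castLE (by omega) l0 :=
            fun hcon => hl (Fin.castLE_inj.mp hcon)
          rw [Pi.single_eq_of_ne hne, Pi.zero_apply, zero_mul]
        · intro hcon; exact absurd (Finset.mem_univ _) hcon
      rw [ecol] at h
      have ecol2 : (∑ i : Fin n,
            (Pi.single (Fin.castLE (by omega) l0) (Pi.single i0 1) : E)
              (Fin.castLE (by omega) l0) i * fderiv ℝ (phat ((l0:ℕ)) i) q u)
          = fderiv ℝ (phat ((l0:ℕ)) i0) q u := by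
        have e1 : (∑ i : Fin n,
            (Pi.single (Fin.castLE (by omega) l0) (Pi.single i0 1) : E)
              (Fin.castLE (by omega) l0) i * fderiv ℝ (phat ((l0:ℕ)) i) q u)
            = (Pi.single (Fin.castLE (by omega : k ≤ 2*k) l0) (Pi.single i0 1) : E)
              (Fin.castLE (by omega) l0) i0 * fderiv ℝ (phat ((l0:ℕ)) i0) q u := by
          apply Finset.sum_eq_single
          · intro i _ hi
            rw [Pi.single_eq_same, Pi.single_eq_of_ne hi, zero_mul]
          · intro hcon; exact absurd (Finset.mem_univ _) hcon
        rw [e1, Pi.single_eq_same, Pi.single_eq_same, one_mul]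
      rw [ecol2] at h
      exact h
    -- Stage 3 : the velocity components of u vanish
    have stage3 : ∀ t : ℕ, ∀ m : Fin (2*k), (m:ℕ) < k + t → u m = 0 := by
      intro t
      induction t with
      | zero =>
        intro m hm
        have hcast : Fin.castLE (by omega : k ≤ 2*k) (⟨(m:ℕ), hm⟩ : Fin k) = m := Fin.ext rfl
        rw [← hcast]
        exact stage1 k _ hm
      | succ t ih =>
        intro m hm
        by_cases hc : (m:ℕ) < k + t
        · exact ih m hc
        · have hmt : (m:ℕ) = k + t := by omega
          have htk : t ≤ k - 1 := by omega
          apply hmv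
          funext i
          simp only [Pi.zero_apply]
          have e := key2 ⟨k-1-t, by omega⟩ i
          rw [PC.clm_apply_eq_sum] at e
          have ecol : (∑ m' : Fin (2*k), ∑ j : Fin n,
                u m' j * fderiv ℝ (phat ((k-1-t : ℕ)) i) q (Pi.single m' (Pi.single j 1)))
              = ∑ j : Fin n,
                u m j * fderiv ℝ (phat ((k-1-t : ℕ)) i) q (Pi.single m (Pi.single j 1)) := by
            apply Finset.sum_eq_single
            · intro m' _ hm'
              by_cases hc' : (m':ℕ) < k + t
              · apply Finset.sum_eq_zero; intro j _
                rw [ih m' hc', Pi.zero_apply, zero_mul]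
              · apply Finset.sum_eq_zero; intro j _
                have hnev : ((m':ℕ)) ≠ k + t := fun hq => hm' (Fin.ext (by omega))
                rw [hvan (k-1-t) (by omega) i m' j (by omega), mul_zero]
            · intro hcon; exact absurd (Finset.mem_univ _) hcon
          rw [ecol] at e
          have hterm : ∀ j, u m j * fderiv ℝ (phat ((k-1-t : ℕ)) i) q
                (Pi.single m (Pi.single j 1))
              = (-1:ℝ)^(k-(k-1-t)-1) * (Hm i j * u m j) := by
            intro j
            rw [htop (k-1-t) (by omega) i j m (by omega)]
            ring
          rw [Finset.sum_congr rfl fun j _ => hterm j, ← Finset.mul_sum] at e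
          have hsum : ∑ j, Hm i j * u m j = 0 :=
            (mul_eq_zero.mp e).resolve_left (pow_ne_zero _ (by norm_num))
          exact hsum
    funext m
    exact stage3 k m (by omega)
end

section
/- Linear algebra version of Proposition 5.1: Let V = S ⊕ K where Ω is an alternating bilinear form on V with ker Ω = K, and let φ_a : V → ℝ, a = 1,…,r, be linear functionals with r = dim K and W₁ = ∩_a ker φ_a. Let (e_b) be a basis of K and set R_{ab} = φ_a(e_b). Then the restriction of Ω to W₁ is nondegenerate if and only if the r × r matrix (R_{ab}) is invertible. -/
/-- The `Ω`-orthogonal complement of a subspace. -/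
def omegaPerp {V : Type*} [AddCommGroup V] [Module ℝ V]
    (Ω : V →ₗ[ℝ] V →ₗ[ℝ] ℝ) (S : Submodule ℝ V) : Submodule ℝ V where
  carrier := {v | ∀ w ∈ S, Ω v w = 0}
  add_mem' := by
    intro a b ha hb w hw
    simp [map_add, LinearMap.add_apply, ha w hw, hb w hw]
  zero_mem' := by intro w hw; simp
  smul_mem' := by
    intro c a ha w hw
    simp [map_smul, LinearMap.smul_apply, ha w hw]

/-- Linear-algebra version of Proposition 5.1: with `V = S ⊕ K`, `K = ker Ω`,
constraint functionals `φ_a` cutting out `W₁`, a basis `e` of `K` and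
`R_{ab} = φ_a(e_b)`, the restriction of `Ω` to `W₁` is nondegenerate iff the matrix
`R` is invertible. -/
theorem constraint_symplectic_iff_R_regular {V : Type*} [AddCommGroup V] [Module ℝ V]
    [FiniteDimensional ℝ V]
    (Ω : V →ₗ[ℝ] V →ₗ[ℝ] ℝ) (halt : ∀ v, Ω v v = 0)
    (S : Submodule ℝ V) (hcompl : IsCompl S (LinearMap.ker Ω))
    (r : ℕ) (φ : Fin r → (V →ₗ[ℝ] ℝ))
    (e : Module.Basis (Fin r) ℝ (LinearMap.ker Ω))
    (W₁ : Submodule ℝ V) (hW₁ : W₁ = ⨅ a, LinearMap.ker (φ a))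
    (R : Matrix (Fin r) (Fin r) ℝ) (hR : ∀ a b, R a b = φ a (e b : V)) :
    W₁ ⊓ omegaPerp Ω W₁ = ⊥ ↔ IsUnit R.det := by
  subst hW₁
  have key : ∀ (c : Fin r → ℝ) a, φ a ((∑ b, c b • e b : LinearMap.ker Ω) : V) = R.mulVec c a := by
    intro c a
    simp [Matrix.mulVec, dotProduct, hR, mul_comm]
  constructor
  · intro h0
    rw [isUnit_iff_ne_zero]
    intro hdet
    obtain ⟨c, hc, hmv⟩ := Matrix.exists_mulVec_eq_zero_iff.mpr hdet
    set k : LinearMap.ker Ω := ∑ b, c b • e b with hk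
    have hkW : (k : V) ∈ ⨅ a, LinearMap.ker (φ a) := by
      rw [Submodule.mem_iInf]
      intro a
      have h1 : φ a (k : V) = R.mulVec c a := key c a
      simp [LinearMap.mem_ker, h1, hmv]
    have hkP : (k : V) ∈ omegaPerp Ω (⨅ a, LinearMap.ker (φ a)) := by
      intro w hw
      have h2 : Ω (k : V) = 0 := k.2
      simp [h2]
    have hmem : (k : V) ∈ (⊥ : Submodule ℝ V) := h0 ▸ Submodule.mem_inf.mpr ⟨hkW, hkP⟩
    have hk0 : k = 0 := by
      have := (Submodule.mem_bot ℝ).mp hmem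
      exact Subtype.ext this
    apply hc
    have h3 : e.equivFun.symm c = 0 := by
      rw [Module.Basis.equivFun_symm_apply]
      exact hk0
    have h4 : e.equivFun.symm c = e.equivFun.symm 0 := by rw [h3, map_zero]
    exact e.equivFun.symm.injective h4
  · intro hdet
    rw [Submodule.eq_bot_iff]
    rintro v hv
    obtain ⟨hv1, hv2⟩ := Submodule.mem_inf.mp hv
    have hker : v ∈ LinearMap.ker Ω := by
      rw [LinearMap.mem_ker]
      ext w
      simp only [LinearMap.zero_apply]
      -- build k ∈ K with w - k ∈ W₁
      set d : Fin r → ℝ := R⁻¹.mulVec (fun a => φ a w) with hd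
      set k : LinearMap.ker Ω := ∑ b, d b • e b with hk
      have hwk : w - (k : V) ∈ ⨅ a, LinearMap.ker (φ a) := by
        rw [Submodule.mem_iInf]
        intro a
        have h1 : φ a (k : V) = R.mulVec d a := key d a
        have h2 : R.mulVec d = fun a => φ a w := by
          rw [hd, Matrix.mulVec_mulVec, Matrix.mul_nonsing_inv _ hdet, Matrix.one_mulVec]
        have h3 : φ a (w - (k : V)) = 0 := by
          rw [map_sub, h1, h2]
          simp
        exact h3
      have e1 : Ω v (w - (k : V)) = 0 := hv2 _ hwk
      have e2 : Ω v (k : V) = 0 := by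
        have skew : Ω v (k : V) = - Ω (k : V) v := by
          have h := halt (v + (k : V))
          simp only [map_add, LinearMap.add_apply] at h
          rw [halt v, halt (k : V)] at h
          linarith
        have h2 : Ω (k : V) = 0 := k.2
        rw [skew, h2]
        simp
      have := map_sub (Ω v) w (k : V)
      rw [e1] at this
      have : Ω v w = Ω v (k : V) := by linarith [this]
      rw [this, e2]
    -- now v ∈ K ∩ W₁ ⇒ v = 0
    set c : Fin r → ℝ := fun b => e.repr ⟨v, hker⟩ b with hc
    have hvsum : ((∑ b, c b • e b : LinearMap.ker Ω) : V) = v := by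
      have := e.sum_repr ⟨v, hker⟩
      exact congrArg Subtype.val this
    have hmv : R.mulVec c = 0 := by
      funext a
      rw [← key c a, hvsum]
      exact Submodule.mem_iInf _ |>.mp hv1 a
    have hc0 : c = 0 := by
      have : R⁻¹.mulVec (R.mulVec c) = c := by
        rw [Matrix.mulVec_mulVec, Matrix.nonsing_inv_mul _ hdet, Matrix.one_mulVec]
      rw [hmv] at this
      rw [← this]
      simp [Matrix.mulVec_zero]
    rw [← hvsum, hc0]
    simp
end
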